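/- arXiv:2411.13479 — 3 statements merged into one kernel-verified Lean document; each statement's English description precedes it below -/
import Mathlib

section
/- Let H be a structural matrix, W a symmetric positive definite m×m real matrix, and set P_W = H(HᵀWH)⁻¹HᵀW. Then for every m×k real matrix M (any k ≥ 1), 0 ≤ Tr(W P_W M Mᵀ P_Wᵀ) ≤ Tr(W M Mᵀ). -/
/-!
With `A := HᵀWH`, the matrix `P_W = H A⁻¹ HᵀW` is idempotent and `W`-self-adjoint
(`P_Wᵀ W = W P_W`). Hence the `W`-weighted trace splits orthogonally,
`Tr(W X) = Tr(W P_W X P_Wᵀ) + Tr(W (1 - P_W) X (1 - P_W)ᵀ)`,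
and for `X = M Mᵀ` both summands are traces of positive semidefinite matrices `BᵀWB`.
-/

open Matrix

namespace Matrix

section WeightedProj

variable {ι κ R : Type*} [Fintype ι] [Fintype κ] [DecidableEq κ]

lemma mulVec_injective_fromRows_one [CommRing R] {p : Type*} (Hsub : Matrix p κ R) :
    Function.Injective (fromRows (1 : Matrix κ κ R) Hsub).mulVec := fun v w h => by
  simpa [fromRows_mulVec] using congrArg (· ∘ Sum.inl) h

/-- `P_W`, the `W`-orthogonal projection onto the column space of `H`. -/
noncomputable def weightedProj [CommRing R] (W : Matrix ι ι R) (H : Matrix ι κ R) :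
    Matrix ι ι R :=
  H * (Hᵀ * W * H)⁻¹ * (Hᵀ * W)

variable [CommRing R] {W : Matrix ι ι R} {H : Matrix ι κ R}

lemma isIdempotentElem_weightedProj (h : IsUnit (Hᵀ * W * H).det) :
    IsIdempotentElem (weightedProj W H) := by
  unfold IsIdempotentElem weightedProj
  calc H * (Hᵀ * W * H)⁻¹ * (Hᵀ * W) * (H * (Hᵀ * W * H)⁻¹ * (Hᵀ * W))
      = H * ((Hᵀ * W * H)⁻¹ * (Hᵀ * W * H)) * (Hᵀ * W * H)⁻¹ * (Hᵀ * W) := by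
        simp only [Matrix.mul_assoc]
    _ = H * (Hᵀ * W * H)⁻¹ * (Hᵀ * W) := by
        rw [nonsing_inv_mul _ h, Matrix.mul_one]

lemma transpose_weightedProj_mul (hW : Wᵀ = W) :
    (weightedProj W H)ᵀ * W = W * weightedProj W H := by
  have hA : (Hᵀ * (W * H))ᵀ = Hᵀ * (W * H) := by
    simp only [transpose_mul, transpose_transpose, hW, Matrix.mul_assoc]
  simp only [weightedProj, transpose_mul, transpose_transpose, hW, transpose_nonsing_inv,
    Matrix.mul_assoc, hA]

end WeightedProj

section Trace

variable {ι R : Type*} [Fintype ι] [DecidableEq ι] [CommRing R] {W P : Matrix ι ι R}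

lemma trace_mul_eq_add_of_isIdempotentElem (hP : IsIdempotentElem P)
    (hPW : Pᵀ * W = W * P) (X : Matrix ι ι R) :
    (W * X).trace = (W * P * X * Pᵀ).trace + (W * ((1 - P) * X * (1 - P)ᵀ)).trace := by
  have hXP : (W * X * Pᵀ).trace = (W * P * X).trace := by
    rw [trace_mul_comm, ← Matrix.mul_assoc, hPW]
  have hPXP : (W * P * X * Pᵀ).trace = (W * P * X).trace := by
    rw [trace_mul_comm, ← Matrix.mul_assoc, ← Matrix.mul_assoc, hPW, Matrix.mul_assoc W P P,
      hP.eq]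
  have hexp : W * ((1 - P) * X * (1 - P)ᵀ)
      = W * X - W * P * X - W * X * Pᵀ + W * P * X * Pᵀ := by
    simp only [transpose_sub, transpose_one]
    noncomm_ring
  rw [hexp, trace_add, trace_sub, trace_sub, hXP, hPXP]
  ring

end Trace

lemma trace_mul_mul_transpose_nonneg {ι k : Type*} [Fintype ι] [Fintype k]
    {W : Matrix ι ι ℝ} (hW : W.PosSemidef) (B : Matrix ι k ℝ) : 0 ≤ (W * (B * Bᵀ)).trace := by
  rw [← Matrix.mul_assoc, trace_mul_cycle]
  simpa [conjTranspose_eq_transpose_of_trivial] using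
    (hW.conjTranspose_mul_mul_same B).trace_nonneg

lemma trace_projection_nonneg_and_le {ι k : Type*} [Fintype ι] [DecidableEq ι] [Fintype k]
    {W P : Matrix ι ι ℝ} (hW : W.PosSemidef) (hP : IsIdempotentElem P)
    (hPW : Pᵀ * W = W * P) (M : Matrix ι k ℝ) :
    0 ≤ (W * P * (M * Mᵀ) * Pᵀ).trace ∧
      (W * P * (M * Mᵀ) * Pᵀ).trace ≤ (W * (M * Mᵀ)).trace := by
  have hproj : W * P * (M * Mᵀ) * Pᵀ = W * ((P * M) * (P * M)ᵀ) := by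
    simp only [transpose_mul, Matrix.mul_assoc]
  have hcompl : W * ((1 - P) * (M * Mᵀ) * (1 - P)ᵀ)
      = W * (((1 - P) * M) * ((1 - P) * M)ᵀ) := by
    simp only [transpose_mul, Matrix.mul_assoc]
  have hsplit := trace_mul_eq_add_of_isIdempotentElem hP hPW (M * Mᵀ)
  have hcompl_nonneg := trace_mul_mul_transpose_nonneg hW ((1 - P) * M)
  rw [← hcompl] at hcompl_nonneg
  exact ⟨hproj ▸ trace_mul_mul_transpose_nonneg hW (P * M), by linarith⟩

end Matrix

theorem stmt8_general (n p : ℕ)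
    (Hsub : Matrix (Fin p) (Fin n) ℝ)
    (H : Matrix (Fin n ⊕ Fin p) (Fin n) ℝ) (hH : H = Matrix.fromRows 1 Hsub)
    (W : Matrix (Fin n ⊕ Fin p) (Fin n ⊕ Fin p) ℝ) (hW : W.PosDef)
    (PW : Matrix (Fin n ⊕ Fin p) (Fin n ⊕ Fin p) ℝ)
    (hPW : PW = H * (Hᵀ * W * H)⁻¹ * (Hᵀ * W))
    (k : ℕ) (M : Matrix (Fin n ⊕ Fin p) (Fin k) ℝ) :
    0 ≤ (W * PW * (M * Mᵀ) * PWᵀ).trace ∧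
      (W * PW * (M * Mᵀ) * PWᵀ).trace ≤ (W * (M * Mᵀ)).trace := by
  have hWsymm : Wᵀ = W := by
    simpa [conjTranspose_eq_transpose_of_trivial] using hW.isHermitian.eq
  have hA : (Hᵀ * W * H).PosDef := by
    subst hH
    simpa [conjTranspose_eq_transpose_of_trivial] using
      hW.conjTranspose_mul_mul_same (mulVec_injective_fromRows_one Hsub)
  have hPW' : PW = weightedProj W H := hPW
  subst hPW'
  exact trace_projection_nonneg_and_le hW.posSemidef
    (isIdempotentElem_weightedProj ((isUnit_iff_isUnit_det _).mp hA.isUnit))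
    (transpose_weightedProj_mul hWsymm) M

/-- Trace reduction by the `W`-orthogonal projection `P_W` onto `Im(H)`:
`0 ≤ Tr(W P_W M Mᵀ P_Wᵀ) ≤ Tr(W M Mᵀ)` for every `m × k` matrix `M`. -/
theorem stmt8 (n p : ℕ) (hn : 2 ≤ n) (hp : 1 ≤ p)
    (Hsub : Matrix (Fin p) (Fin n) ℝ)
    (H : Matrix (Fin n ⊕ Fin p) (Fin n) ℝ) (hH : H = Matrix.fromRows 1 Hsub)
    (W : Matrix (Fin n ⊕ Fin p) (Fin n ⊕ Fin p) ℝ) (hW : W.PosDef)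
    (PW : Matrix (Fin n ⊕ Fin p) (Fin n ⊕ Fin p) ℝ)
    (hPW : PW = H * (Hᵀ * W * H)⁻¹ * (Hᵀ * W))
    (k : ℕ) (hk : 1 ≤ k) (M : Matrix (Fin n ⊕ Fin p) (Fin k) ℝ) :
    0 ≤ (W * PW * (M * Mᵀ) * PWᵀ).trace ∧
      (W * PW * (M * Mᵀ) * PWᵀ).trace ≤ (W * (M * Mᵀ)).trace :=
  stmt8_general n p Hsub H hH W hW PW hPW k M
end

section
/- Let s_1,…,s_N,s_{N+1} be exchangeable real random variables (for instance i.i.d.), and for k ∈ {1,…,N} let s_{(k)} denote the k-th order statistic of s_1,…,s_N. Then for every k ∈ {1,…,N}: P(s_{N+1} ≤ s_{(k)}) ≥ k/(N+1) and P(s_{N+1} < s_{(k)}) ≤ k/(N+1). -/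
/-!
Let `r<(t)` and `r≤(t)` count the scores strictly below, resp. at most, `s t` among all `N + 1`
scores. The test score is at most `s_(k)` iff `r<(last) < k`, and strictly below it iff
`r≤(last) ≤ k`. Pointwise, at least `k` indices `t` have `r<(t) < k` (look at the smallest score
outside this set) and at most `k` have `r≤(t) ≤ k` (look at the largest score inside it). By
exchangeability each of the `N + 1` indices satisfies such a rank condition with the same
probability, so `(N + 1) · P(event)` is the expected number of such indices, which lies on the
correct side of `k`.
-/

open MeasureTheory ProbabilityTheory Matrix
open scoped ENNReal

/-- The `k`-th order statistic (1-indexed) of `N` real numbers,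
with junk value `0` outside the range `1 ≤ k ≤ N`. -/
noncomputable def ostat {N : ℕ} (s : Fin N → ℝ) (k : ℕ) : ℝ :=
  if h : 1 ≤ k ∧ k ≤ N then (s ∘ Tuple.sort s) ⟨k - 1, by omega⟩ else 0

open Finset

section Rank

variable {β : Type*} [LinearOrder β]

lemma card_filter_le_iff_of_monotone {n : ℕ} {g : Fin n → β} (hg : Monotone g)
    {p : β → Prop} [DecidablePred p] (hp : IsLowerSet {b | p b}) (j : Fin n) :
    #{i | p (g i)} ≤ j ↔ ¬ p (g j) := by
  constructor
  · intro hcard hj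
    have hsub : Iic j ⊆ univ.filter fun i => p (g i) := fun i hi =>
      mem_filter.2 ⟨mem_univ i, show p (g i) from hp (hg (mem_Iic.1 hi)) hj⟩
    have := card_le_card hsub
    rw [Fin.card_Iic] at this
    omega
  · intro hj
    have hsub : (univ.filter fun i => p (g i)) ⊆ Iio j := fun i hi =>
      mem_Iio.2 <| lt_of_not_ge fun hji => hj (hp (hg hji) (mem_filter.1 hi).2)
    simpa using card_le_card hsub

variable {ι : Type*} [Fintype ι]

def strictRank (x : ι → β) (t : ι) : ℕ := #{i | x i < x t}

def weakRank (x : ι → β) (t : ι) : ℕ := #{i | x i ≤ x t}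

lemma strictRank_comp_perm (x : ι → β) (σ : Equiv.Perm ι) (t : ι) :
    strictRank (x ∘ σ) t = strictRank x (σ t) :=
  card_equiv σ fun i => by simp

lemma weakRank_comp_perm (x : ι → β) (σ : Equiv.Perm ι) (t : ι) :
    weakRank (x ∘ σ) t = weakRank x (σ t) :=
  card_equiv σ fun i => by simp

lemma le_card_filter_strictRank_lt {k : ℕ} (hk : k ≤ Fintype.card ι) (x : ι → β) :
    k ≤ #{t | strictRank x t < k} := by
  classical
  set T := univ.filter fun t => strictRank x t < k
  by_contra! hT
  have hTc : Tᶜ.Nonempty := card_pos.1 (by rw [card_compl]; omega)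
  obtain ⟨t₀, ht₀, hmin⟩ := Tᶜ.exists_min_image x hTc
  have hsub : (univ.filter fun i => x i < x t₀) ⊆ T := fun i hi => by
    by_contra hiT
    exact (hmin i (mem_compl.2 hiT)).not_gt (mem_filter.1 hi).2
  exact mem_compl.1 ht₀ (mem_filter.2 ⟨mem_univ t₀, (card_le_card hsub).trans_lt hT⟩)

lemma card_filter_weakRank_le_le (x : ι → β) (k : ℕ) :
    #{t | weakRank x t ≤ k} ≤ k := by
  set T := univ.filter fun t => weakRank x t ≤ k
  by_contra! hT
  obtain ⟨t₀, ht₀, hmax⟩ := T.exists_max_image x (card_pos.1 (by omega))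
  have hsub : T ⊆ univ.filter fun i => x i ≤ x t₀ := fun i hi =>
    mem_filter.2 ⟨mem_univ i, hmax i hi⟩
  exact hT.not_ge ((card_le_card hsub).trans (mem_filter.1 ht₀).2)

lemma strictRank_last {N : ℕ} (x : Fin (N + 1) → β) :
    strictRank x (Fin.last N) = #{i : Fin N | x i.castSucc < x (Fin.last N)} := by
  rw [strictRank, card_filter, card_filter, Fin.sum_univ_castSucc]
  simp

lemma weakRank_last {N : ℕ} (x : Fin (N + 1) → β) :
    weakRank x (Fin.last N) = #{i : Fin N | x i.castSucc ≤ x (Fin.last N)} + 1 := by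
  rw [weakRank, card_filter, card_filter, Fin.sum_univ_castSucc]
  simp

end Rank

section OrderStatistic

lemma card_filter_lt_iff_not_ostat {N k : ℕ} (hk1 : 1 ≤ k) (hkN : k ≤ N) (y : Fin N → ℝ)
    {p : ℝ → Prop} [DecidablePred p] (hp : IsLowerSet {b | p b}) :
    #{i | p (y i)} < k ↔ ¬ p (ostat y k) := by
  have hsort : #{i | p (y (Tuple.sort y i))} = #{i | p (y i)} :=
    card_equiv (Tuple.sort y) fun i => by simp
  rw [ostat, dif_pos ⟨hk1, hkN⟩, ← card_filter_le_iff_of_monotone (Tuple.monotone_sort y) hp]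
  simp only [Function.comp_apply, hsort]
  omega

variable {N k : ℕ} (x : Fin (N + 1) → ℝ)

lemma le_ostat_iff_strictRank_lt (hk1 : 1 ≤ k) (hkN : k ≤ N) :
    x (Fin.last N) ≤ ostat (fun t => x t.castSucc) k ↔ strictRank x (Fin.last N) < k := by
  rw [strictRank_last, card_filter_lt_iff_not_ostat hk1 hkN _ (p := (· < x (Fin.last N)))
    (isLowerSet_Iio _), not_lt]

lemma lt_ostat_iff_weakRank_le (hk1 : 1 ≤ k) (hkN : k ≤ N) :
    x (Fin.last N) < ostat (fun t => x t.castSucc) k ↔ weakRank x (Fin.last N) ≤ k := by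
  rw [weakRank_last, Nat.add_one_le_iff,
    card_filter_lt_iff_not_ostat hk1 hkN _ (p := (· ≤ x (Fin.last N))) (isLowerSet_Iic _), not_le]

end OrderStatistic

section Measurability

variable {α β ι : Type*} [MeasurableSpace α] [Fintype ι]

lemma measurable_card_filter {p : ι → α → Prop} [∀ i, DecidablePred (p i)]
    (hp : ∀ i, MeasurableSet {a | p i a}) : Measurable fun a => #{i | p i a} := by
  simp_rw [card_filter]
  exact Finset.measurable_sum _ fun i _ => Measurable.ite (hp i) measurable_const measurable_const

variable [TopologicalSpace β] [MeasurableSpace β] [OpensMeasurableSpace β] [LinearOrder β]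
  [OrderClosedTopology β] [SecondCountableTopology β]

lemma measurable_strictRank (t : ι) : Measurable fun x : ι → β => strictRank x t :=
  measurable_card_filter fun i => measurableSet_lt (measurable_pi_apply i) (measurable_pi_apply t)

lemma measurable_weakRank (t : ι) : Measurable fun x : ι → β => weakRank x t :=
  measurable_card_filter fun i => measurableSet_le (measurable_pi_apply i) (measurable_pi_apply t)

end Measurability

section Exchangeable

variable {Ω ι α : Type*} [MeasurableSpace Ω] [MeasurableSpace α] {μ : Measure Ω}
  {X : ι → Ω → α} {A : ι → Set (ι → α)}

def Exchangeable (μ : Measure Ω) (X : ι → Ω → α) : Prop :=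
  ∀ σ : Equiv.Perm ι, Measure.map (fun ω t => X (σ t) ω) μ = Measure.map (fun ω t => X t ω) μ

lemma Exchangeable.measure_mem_eq (hexch : Exchangeable μ X) (hX : ∀ t, Measurable (X t))
    (hA : ∀ t, MeasurableSet (A t)) (hAσ : ∀ (σ : Equiv.Perm ι) x t, x ∘ σ ∈ A t ↔ x ∈ A (σ t))
    (t t' : ι) :
    μ {ω | (fun i => X i ω) ∈ A t} = μ {ω | (fun i => X i ω) ∈ A t'} := by
  classical
  have hperm : ∀ (σ : Equiv.Perm ι) t,
      μ {ω | (fun i => X i ω) ∈ A (σ t)} = μ {ω | (fun i => X i ω) ∈ A t} := fun σ t =>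
    calc μ {ω | (fun i => X i ω) ∈ A (σ t)}
        = Measure.map (fun ω i => X (σ i) ω) μ (A t) := by
          rw [Measure.map_apply (measurable_pi_lambda _ fun i => hX (σ i)) (hA t)]
          exact congrArg μ (Set.ext fun ω => (hAσ σ (fun i => X i ω) t).symm)
      _ = Measure.map (fun ω i => X i ω) μ (A t) := by rw [hexch]
      _ = μ {ω | (fun i => X i ω) ∈ A t} :=
          Measure.map_apply (measurable_pi_lambda _ hX) (hA t)
  simpa using hperm (Equiv.swap t' t) t'

variable [Fintype ι] [∀ t, DecidablePred (· ∈ A t)]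

lemma Exchangeable.card_mul_measure_eq_lintegral_card (hexch : Exchangeable μ X)
    (hX : ∀ t, Measurable (X t)) (hA : ∀ t, MeasurableSet (A t))
    (hAσ : ∀ (σ : Equiv.Perm ι) x t, x ∘ σ ∈ A t ↔ x ∈ A (σ t)) (t₀ : ι) :
    Fintype.card ι * μ {ω | (fun i => X i ω) ∈ A t₀}
      = ∫⁻ ω, (#{t | (fun i => X i ω) ∈ A t} : ℝ≥0∞) ∂μ := by
  set E : ι → Set Ω := fun t => {ω | (fun i => X i ω) ∈ A t}
  have hE : ∀ t, MeasurableSet (E t) := fun t => measurable_pi_lambda _ hX (hA t)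
  calc Fintype.card ι * μ (E t₀) = ∑ t, μ (E t) := by
        simp [E, hexch.measure_mem_eq hX hA hAσ _ t₀]
    _ = ∑ t, ∫⁻ ω, (E t).indicator 1 ω ∂μ := by simp_rw [lintegral_indicator_one (hE _)]
    _ = ∫⁻ ω, ∑ t, (E t).indicator 1 ω ∂μ :=
        (lintegral_finsetSum _ fun t _ => measurable_one.indicator (hE t)).symm
    _ = ∫⁻ ω, (#{t | (fun i => X i ω) ∈ A t} : ℝ≥0∞) ∂μ := by
        simp [E, Set.indicator_apply]

lemma ofReal_div_card_eq {k : ℕ} (t₀ : ι) :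
    ENNReal.ofReal (k / Fintype.card ι) = (k : ℝ≥0∞) / Fintype.card ι := by
  have : Nonempty ι := ⟨t₀⟩
  rw [ENNReal.ofReal_div_of_pos (by positivity), ENNReal.ofReal_natCast, ENNReal.ofReal_natCast]

variable [IsProbabilityMeasure μ]

lemma Exchangeable.ofReal_div_card_le_measure (hexch : Exchangeable μ X)
    (hX : ∀ t, Measurable (X t)) (hA : ∀ t, MeasurableSet (A t))
    (hAσ : ∀ (σ : Equiv.Perm ι) x t, x ∘ σ ∈ A t ↔ x ∈ A (σ t))
    {k : ℕ} (hk : ∀ x, k ≤ #{t | x ∈ A t}) (t₀ : ι) :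
    ENNReal.ofReal (k / Fintype.card ι) ≤ μ {ω | (fun i => X i ω) ∈ A t₀} := by
  rw [ofReal_div_card_eq t₀, ENNReal.div_le_iff_le_mul (Or.inr (measure_ne_top _ _))
    (Or.inl (ENNReal.natCast_ne_top _)), mul_comm,
    hexch.card_mul_measure_eq_lintegral_card hX hA hAσ]
  calc (k : ℝ≥0∞) = ∫⁻ _, (k : ℝ≥0∞) ∂μ := by simp
    _ ≤ _ := lintegral_mono fun ω => Nat.cast_le.2 (hk _)

lemma Exchangeable.measure_le_ofReal_div_card (hexch : Exchangeable μ X)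
    (hX : ∀ t, Measurable (X t)) (hA : ∀ t, MeasurableSet (A t))
    (hAσ : ∀ (σ : Equiv.Perm ι) x t, x ∘ σ ∈ A t ↔ x ∈ A (σ t))
    {k : ℕ} (hk : ∀ x, #{t | x ∈ A t} ≤ k) (t₀ : ι) :
    μ {ω | (fun i => X i ω) ∈ A t₀} ≤ ENNReal.ofReal (k / Fintype.card ι) := by
  have : Nonempty ι := ⟨t₀⟩
  rw [ofReal_div_card_eq t₀, ENNReal.le_div_iff_mul_le (Or.inl (by simp))
    (Or.inl (ENNReal.natCast_ne_top _)), mul_comm,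
    hexch.card_mul_measure_eq_lintegral_card hX hA hAσ]
  calc _ ≤ ∫⁻ _, (k : ℝ≥0∞) ∂μ := lintegral_mono fun ω => Nat.cast_le.2 (hk _)
    _ = k := by simp

end Exchangeable

theorem stmt17_general {Ω : Type*} [MeasurableSpace Ω] (μ : Measure Ω) [IsProbabilityMeasure μ]
    (N : ℕ) (s : Fin (N + 1) → Ω → ℝ) (hmeas : ∀ t, Measurable (s t))
    (hexch : ∀ σ : Equiv.Perm (Fin (N + 1)),
      Measure.map (fun ω => fun t => s (σ t) ω) μ = Measure.map (fun ω => fun t => s t ω) μ)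
    (k : ℕ) (hk1 : 1 ≤ k) (hkN : k ≤ N) :
    ENNReal.ofReal ((k : ℝ) / ((N : ℝ) + 1)) ≤
        μ {ω | s (Fin.last N) ω ≤ ostat (fun t : Fin N => s t.castSucc ω) k} ∧
      μ {ω | s (Fin.last N) ω < ostat (fun t : Fin N => s t.castSucc ω) k} ≤
        ENNReal.ofReal ((k : ℝ) / ((N : ℝ) + 1)) := by
  have hs : Exchangeable μ s := hexch
  have hcard : (Fintype.card (Fin (N + 1)) : ℝ) = N + 1 := by simp
  have hle : {ω | s (Fin.last N) ω ≤ ostat (fun t : Fin N => s t.castSucc ω) k}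
      = {ω | (fun i => s i ω) ∈ {x | strictRank x (Fin.last N) < k}} :=
    Set.ext fun ω => le_ostat_iff_strictRank_lt (fun i => s i ω) hk1 hkN
  have hlt : {ω | s (Fin.last N) ω < ostat (fun t : Fin N => s t.castSucc ω) k}
      = {ω | (fun i => s i ω) ∈ {x | weakRank x (Fin.last N) ≤ k}} :=
    Set.ext fun ω => lt_ostat_iff_weakRank_le (fun i => s i ω) hk1 hkN
  rw [hle, hlt, ← hcard]
  constructor
  · exact hs.ofReal_div_card_le_measure (A := fun t => {x | strictRank x t < k}) hmeas
      (fun t => measurable_strictRank t measurableSet_Iio)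
      (fun σ x t => by simp [strictRank_comp_perm])
      (fun x => le_card_filter_strictRank_lt (by rw [Fintype.card_fin]; omega) x) (Fin.last N)
  · exact hs.measure_le_ofReal_div_card (A := fun t => {x | weakRank x t ≤ k}) hmeas
      (fun t => measurable_weakRank t measurableSet_Iic)
      (fun σ x t => by simp [weakRank_comp_perm])
      (fun x => card_filter_weakRank_le_le x k) (Fin.last N)

/-- For exchangeable scores, the test score falls below the `k`-th order
statistic of the `N` calibration scores with probability at least `k/(N+1)` (for `≤`) and
at most `k/(N+1)` (for `<`). -/
theorem stmt17 {Ω : Type*} [MeasurableSpace Ω] (μ : Measure Ω) [IsProbabilityMeasure μ]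
    (N : ℕ) (hN : 1 ≤ N) (s : Fin (N + 1) → Ω → ℝ) (hmeas : ∀ t, Measurable (s t))
    (hexch : ∀ σ : Equiv.Perm (Fin (N + 1)),
      Measure.map (fun ω => fun t => s (σ t) ω) μ = Measure.map (fun ω => fun t => s t ω) μ)
    (k : ℕ) (hk1 : 1 ≤ k) (hkN : k ≤ N) :
    ENNReal.ofReal ((k : ℝ) / ((N : ℝ) + 1)) ≤
        μ {ω | s (Fin.last N) ω ≤ ostat (fun t : Fin N => s t.castSucc ω) k} ∧
      μ {ω | s (Fin.last N) ω < ostat (fun t : Fin N => s t.castSucc ω) k} ≤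
        ENNReal.ofReal ((k : ℝ) / ((N : ℝ) + 1)) :=
  stmt17_general μ N s hmeas hexch k hk1 hkN
end

section
/- Let ŝ_1,…,ŝ_N be i.i.d. random vectors in ℝ^m whose common distribution is the elliptical distribution of c + Mz, where c ∈ ℝ^m is deterministic, M is an m×k real matrix with MMᵀ of rank k, and z follows a spherical distribution on ℝ^k; set Γ = MMᵀ. Then there exist i.i.d. real random variables v_1,…,v_N such that for every component i ∈ {1,…,m}, the random vector (ŝ_{1,i},…,ŝ_{N,i}) has the same joint distribution as (c_i + √(Γ_{i,i}) v_1,…, c_i + √(Γ_{i,i}) v_N). Consequently, for any 1 ≤ k₁ ≤ k₂ ≤ N, the difference of order statistics ŝ_{(k₂),i} − ŝ_{(k₁),i} has the same distribution as √(Γ_{i,i}) (v_{(k₂)} − v_{(k₁)}), simultaneously for all i. -/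
/-!
Put `v_t := a ⬝ᵥ (ŝ_t - c)`, with `a` normalised so that `aᵀ Γ a = 1` (or `a = 0` when the
diagonal of `Γ` vanishes). Both `ŝ_{t,i}` and `c_i + √Γ_ii v_t` are then images of `c + M z`,
namely `c_i + M_i ⬝ᵥ z` and `c_i + √Γ_ii (Mᵀ a) ⬝ᵥ z`. The vectors `M_i` and `√Γ_ii Mᵀ a` have the
same length, so a Householder reflection maps one to the other and spherical symmetry of `z`
makes the two laws equal. Independence upgrades this to equality of the joint laws, and order
statistics commute with the increasing map `x ↦ c_i + √Γ_ii x`.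
-/

open MeasureTheory ProbabilityTheory Matrix
open scoped ENNReal

/-- A random vector `z` in `ℝ^k` follows a spherical distribution (w.r.t. `μ`) if `Γ z`
has the same law as `z` for every orthogonal matrix `Γ`. -/
def IsSpherical {Ω : Type*} [MeasurableSpace Ω] {k : ℕ} (μ : Measure Ω)
    (z : Ω → Fin k → ℝ) : Prop :=
  ∀ Γ : Matrix (Fin k) (Fin k) ℝ, Γ * Γᵀ = 1 →
    Measure.map (fun ω => Γ.mulVec (z ω)) μ = Measure.map z μ

theorem ostat_comp_of_monotone {N : ℕ} {g : ℝ → ℝ} (hg : Monotone g) (s : Fin N → ℝ) {k : ℕ}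
    (hk₁ : 1 ≤ k) (hkN : k ≤ N) : ostat (fun t => g (s t)) k = g (ostat s k) := by
  have hsorted : (g ∘ s) ∘ Tuple.sort s = (g ∘ s) ∘ Tuple.sort (g ∘ s) :=
    Tuple.comp_sort_eq_comp_iff_monotone.mpr (hg.comp (Tuple.monotone_sort s))
  simp only [ostat, dif_pos (And.intro hk₁ hkN)]
  exact congrFun hsorted.symm _

theorem measurableSet_setOf_sort_eq {N : ℕ} (σ : Equiv.Perm (Fin N)) :
    MeasurableSet {s : Fin N → ℝ | Tuple.sort s = σ} := by
  simp only [eq_comm (b := σ), Tuple.eq_sort_iff, Monotone, Function.comp_apply]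
  refine Measurable.setOf ?_
  fun_prop

theorem measurable_ostat {N : ℕ} (k : ℕ) : Measurable fun s : Fin N → ℝ => ostat s k := by
  unfold ostat
  split_ifs with hk
  · have hsum : (fun s : Fin N → ℝ => (s ∘ Tuple.sort s) ⟨k - 1, by omega⟩) = fun s =>
        ∑ σ : Equiv.Perm (Fin N),
          {s : Fin N → ℝ | Tuple.sort s = σ}.indicator (fun s => s (σ ⟨k - 1, by omega⟩)) s := by
      funext s
      rw [Finset.sum_eq_single (Tuple.sort s) (fun σ _ hσ => by simp [Ne.symm hσ]) (by simp)]
      simp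
    rw [hsum]
    exact Finset.measurable_sum _ fun σ _ =>
      (measurable_pi_apply _).indicator (measurableSet_setOf_sort_eq σ)
  · exact measurable_const

section Householder

variable {n : Type*} [Fintype n] [DecidableEq n]

-- At `d = 0` the coefficient `2 / 0` is `0`, so `householder 0 = 1`.
noncomputable def householder (d : n → ℝ) : Matrix n n ℝ :=
  1 - (2 / (d ⬝ᵥ d)) • vecMulVec d d

theorem householder_transpose (d : n → ℝ) : (householder d)ᵀ = householder d := by
  simp [householder, transpose_vecMulVec]

theorem householder_mul_self (d : n → ℝ) : householder d * householder d = 1 := by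
  have hsq : vecMulVec d d * vecMulVec d d = (d ⬝ᵥ d) • vecMulVec d d := by
    rw [vecMulVec_mul_vecMulVec, vecMulVec_smul]
  rcases eq_or_ne (d ⬝ᵥ d) 0 with hd | hd
  · simp [householder, hd]
  · have hc : 2 / (d ⬝ᵥ d) * (2 / (d ⬝ᵥ d)) * (d ⬝ᵥ d) = 2 / (d ⬝ᵥ d) + 2 / (d ⬝ᵥ d) := by
      field_simp; ring
    simp only [householder, sub_mul, mul_sub, one_mul, mul_one, smul_mul_smul_comm, hsq,
      smul_smul, hc]
    module

theorem householder_sub_mulVec {u w : n → ℝ} (h : u ⬝ᵥ u = w ⬝ᵥ w) :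
    householder (u - w) *ᵥ u = w := by
  rcases eq_or_ne u w with rfl | hne
  · simp [householder]
  have hq : (u - w) ⬝ᵥ (u - w) ≠ 0 := fun h0 =>
    hne (sub_eq_zero.mp (dotProduct_self_eq_zero.mp h0))
  have hhalf : 2 * ((u - w) ⬝ᵥ u) = (u - w) ⬝ᵥ (u - w) := by
    simp only [sub_dotProduct, dotProduct_sub, dotProduct_comm w u, h]; ring
  have hcoef : 2 / ((u - w) ⬝ᵥ (u - w)) * ((u - w) ⬝ᵥ u) = 1 := by
    have hx : (u - w) ⬝ᵥ u ≠ 0 := fun h0 => hq (by rw [← hhalf, h0, mul_zero])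
    rw [← hhalf]
    field_simp
  rw [householder, sub_mulVec, one_mulVec, smul_mulVec, vecMulVec_mulVec, op_smul_eq_smul,
    smul_smul, hcoef, one_smul, sub_sub_cancel]

end Householder

theorem mul_transpose_self_apply_self {n l R : Type*} [Fintype l] [CommSemiring R]
    (M : Matrix n l R) (i : n) : (M * Mᵀ) i i = M i ⬝ᵥ M i := by
  rw [mul_apply']
  rfl

theorem mul_transpose_self_apply_self_nonneg {n l : Type*} [Fintype l] (M : Matrix n l ℝ)
    (i : n) : 0 ≤ (M * Mᵀ) i i :=
  mul_transpose_self_apply_self M i ▸ dotProduct_self_star_nonneg _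

theorem exists_diag_mul_dotProduct_mulVec_eq_diag {n : Type*} [Fintype n] [DecidableEq n]
    (Γ : Matrix n n ℝ) (hΓ : ∀ i, 0 ≤ Γ i i) :
    ∃ a : n → ℝ, ∀ i, Γ i i * (a ⬝ᵥ Γ *ᵥ a) = Γ i i := by
  by_cases hzero : ∀ i, Γ i i = 0
  · exact ⟨0, fun i => by simp [hzero i]⟩
  push Not at hzero
  obtain ⟨i₀, hi₀⟩ := hzero
  refine ⟨Pi.single i₀ (√(Γ i₀ i₀))⁻¹, fun i => ?_⟩
  have hsq : √(Γ i₀ i₀) * √(Γ i₀ i₀) = Γ i₀ i₀ := Real.mul_self_sqrt (hΓ i₀)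
  simp only [mulVec_single, single_dotProduct, op_smul_eq_smul, Pi.smul_apply, col_apply,
    smul_eq_mul]
  rw [← mul_assoc (√(Γ i₀ i₀))⁻¹, ← mul_inv, hsq, inv_mul_cancel₀ hi₀, mul_one]

section Spherical

variable {Ω : Type*} [MeasurableSpace Ω] {μ : Measure Ω} {k : ℕ} {z : Ω → Fin k → ℝ}

theorem IsSpherical.identDistrib_dotProduct (hz : Measurable z) (hsph : IsSpherical μ z)
    {u w : Fin k → ℝ} (h : u ⬝ᵥ u = w ⬝ᵥ w) :
    IdentDistrib (fun ω => u ⬝ᵥ z ω) (fun ω => w ⬝ᵥ z ω) μ μ := by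
  have hAz : IdentDistrib (fun ω => householder (u - w) *ᵥ z ω) z μ μ :=
    ⟨(by fun_prop : Measurable fun ω => householder (u - w) *ᵥ z ω).aemeasurable,
      hz.aemeasurable, hsph _ (by rw [householder_transpose, householder_mul_self])⟩
  have hdot : ∀ x, u ⬝ᵥ householder (u - w) *ᵥ x = w ⬝ᵥ x := fun x => by
    rw [dotProduct_mulVec, ← householder_transpose, vecMul_transpose, householder_sub_mulVec h]
  simpa only [Function.comp_def, hdot] using (hAz.comp (by fun_prop : Measurable (u ⬝ᵥ ·))).symm

theorem IsSpherical.identDistrib_apply_of_identDistrib_affine (hz : Measurable z)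
    (hsph : IsSpherical μ z) {m : ℕ} {X : Ω → Fin m → ℝ} {c : Fin m → ℝ}
    {M : Matrix (Fin m) (Fin k) ℝ} (hX : IdentDistrib X (fun ω => c + M *ᵥ z ω) μ μ)
    {a : Fin m → ℝ} (ha : ∀ i, (M * Mᵀ) i i * (a ⬝ᵥ (M * Mᵀ) *ᵥ a) = (M * Mᵀ) i i) (i : Fin m) :
    IdentDistrib (fun ω => X ω i)
      (fun ω => c i + √((M * Mᵀ) i i) * (a ⬝ᵥ (X ω - c))) μ μ := by
  set r := √((M * Mᵀ) i i)
  have hquad : (a ᵥ* M) ⬝ᵥ (a ᵥ* M) = a ⬝ᵥ (M * Mᵀ) *ᵥ a := by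
    rw [dotProduct_mulVec a (M * Mᵀ), ← vecMul_vecMul, vecMul_transpose, dotProduct_comm _ a,
      dotProduct_mulVec]
  have hnorm : M i ⬝ᵥ M i = (r • (a ᵥ* M)) ⬝ᵥ (r • (a ᵥ* M)) := by
    rw [smul_dotProduct, dotProduct_smul, smul_eq_mul, smul_eq_mul, ← mul_assoc,
      Real.mul_self_sqrt (mul_transpose_self_apply_self_nonneg M i),
      hquad, ha, mul_transpose_self_apply_self]
  have hcoord : IdentDistrib (fun ω => X ω i) (fun ω => c i + M i ⬝ᵥ z ω) μ μ :=
    hX.comp (measurable_pi_apply i)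
  have haffine : IdentDistrib (fun ω => c i + r * (a ⬝ᵥ (X ω - c)))
      (fun ω => c i + (r • (a ᵥ* M)) ⬝ᵥ z ω) μ μ := by
    convert hX.comp (by fun_prop : Measurable fun x => c i + r * (a ⬝ᵥ (x - c))) using 1
    · rfl
    · funext ω
      simp only [Function.comp_apply, add_sub_cancel_left, dotProduct_mulVec, smul_dotProduct,
        smul_eq_mul]
  exact hcoord.trans (((hsph.identDistrib_dotProduct hz hnorm).comp
    (measurable_const_add (c i))).trans haffine.symm)

end Spherical

theorem stmt19_general {Ω : Type*} [MeasurableSpace Ω] (μ : Measure Ω)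
    (N m k : ℕ)
    (c : Fin m → ℝ) (M : Matrix (Fin m) (Fin k) ℝ)
    (z : Ω → Fin k → ℝ) (hz : Measurable z) (hsph : IsSpherical μ z)
    (Γ : Matrix (Fin m) (Fin m) ℝ) (hΓ : Γ = M * Mᵀ)
    (shat : Fin N → Ω → Fin m → ℝ) (hmeas : ∀ t, Measurable (shat t))
    (hindep : iIndepFun shat μ)
    (hlaw : ∀ t, Measure.map (shat t) μ = Measure.map (fun ω => c + M.mulVec (z ω)) μ) :
    ∃ v : Fin N → Ω → ℝ,
      (∀ t, Measurable (v t)) ∧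
      iIndepFun v μ ∧
      (∀ t t', IdentDistrib (v t) (v t') μ μ) ∧
      (∀ i : Fin m,
        IdentDistrib (fun ω => fun t => shat t ω i)
          (fun ω => fun t => c i + Real.sqrt (Γ i i) * v t ω) μ μ) ∧
      (∀ k₁ k₂ : ℕ, 1 ≤ k₁ → k₁ ≤ k₂ → k₂ ≤ N → ∀ i : Fin m,
        IdentDistrib
          (fun ω => ostat (fun t => shat t ω i) k₂ - ostat (fun t => shat t ω i) k₁)
          (fun ω => Real.sqrt (Γ i i) *
            (ostat (fun t => v t ω) k₂ - ostat (fun t => v t ω) k₁)) μ μ) := by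
  subst hΓ
  obtain ⟨a, ha⟩ := exists_diag_mul_dotProduct_mulVec_eq_diag (M * Mᵀ)
    (mul_transpose_self_apply_self_nonneg M)
  have hφ : Measurable fun x : Fin m → ℝ => a ⬝ᵥ (x - c) := by fun_prop
  have hident : ∀ t, IdentDistrib (shat t) (fun ω => c + M *ᵥ z ω) μ μ := fun t =>
    ⟨(hmeas t).aemeasurable, (by fun_prop : Measurable fun ω => c + M *ᵥ z ω).aemeasurable,
      hlaw t⟩
  have hcomponents : ∀ i, IdentDistrib (fun ω t => shat t ω i)
      (fun ω t => c i + √((M * Mᵀ) i i) * (a ⬝ᵥ (shat t ω - c))) μ μ := fun i =>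
    IdentDistrib.pi (fun t => hsph.identDistrib_apply_of_identDistrib_affine hz (hident t) ha i)
      (hindep.comp _ fun _ => measurable_pi_apply i)
      (hindep.comp (fun _ x => c i + √((M * Mᵀ) i i) * (a ⬝ᵥ (x - c))) fun _ => by fun_prop)
  refine ⟨fun t ω => a ⬝ᵥ (shat t ω - c), fun t => hφ.comp (hmeas t),
    hindep.comp _ fun _ => hφ, fun t t' => ((hident t).comp hφ).trans ((hident t').comp hφ).symm,
    hcomponents, fun k₁ k₂ hk₁ hk₁₂ hk₂ i => ?_⟩
  have hr : Monotone fun x => c i + √((M * Mᵀ) i i) * x :=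
    (monotone_id.const_mul (Real.sqrt_nonneg _)).const_add (c i)
  convert (hcomponents i).comp ((measurable_ostat k₂).sub (measurable_ostat k₁)) using 1
  · rfl
  funext ω
  simp only [Function.comp_apply, Pi.sub_apply]
  rw [ostat_comp_of_monotone hr _ (hk₁.trans hk₁₂) hk₂,
    ostat_comp_of_monotone hr _ hk₁ (hk₁₂.trans hk₂)]
  ring

/-- For i.i.d. vectors with a common elliptical distribution `c + Mz`
(`Γ = M Mᵀ`), there exist i.i.d. real random variables `v_1, …, v_N` such that, for every
component `i`, the joint law of `(ŝ_{1,i}, …, ŝ_{N,i})` is that of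
`(c_i + √(Γ_{i,i}) v_1, …, c_i + √(Γ_{i,i}) v_N)`; consequently differences of order
statistics satisfy `ŝ_{(k₂),i} − ŝ_{(k₁),i} ∼ √(Γ_{i,i}) (v_{(k₂)} − v_{(k₁)})`. -/
theorem stmt19 {Ω : Type*} [MeasurableSpace Ω] (μ : Measure Ω) [IsProbabilityMeasure μ]
    (N m k : ℕ) (hN : 1 ≤ N)
    (c : Fin m → ℝ) (M : Matrix (Fin m) (Fin k) ℝ) (hM : (M * Mᵀ).rank = k)
    (z : Ω → Fin k → ℝ) (hz : Measurable z) (hsph : IsSpherical μ z)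
    (Γ : Matrix (Fin m) (Fin m) ℝ) (hΓ : Γ = M * Mᵀ)
    (shat : Fin N → Ω → Fin m → ℝ) (hmeas : ∀ t, Measurable (shat t))
    (hindep : iIndepFun shat μ)
    (hlaw : ∀ t, Measure.map (shat t) μ = Measure.map (fun ω => c + M.mulVec (z ω)) μ) :
    ∃ v : Fin N → Ω → ℝ,
      (∀ t, Measurable (v t)) ∧
      iIndepFun v μ ∧
      (∀ t t', IdentDistrib (v t) (v t') μ μ) ∧
      (∀ i : Fin m,
        IdentDistrib (fun ω => fun t => shat t ω i)
          (fun ω => fun t => c i + Real.sqrt (Γ i i) * v t ω) μ μ) ∧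
      (∀ k₁ k₂ : ℕ, 1 ≤ k₁ → k₁ ≤ k₂ → k₂ ≤ N → ∀ i : Fin m,
        IdentDistrib
          (fun ω => ostat (fun t => shat t ω i) k₂ - ostat (fun t => shat t ω i) k₁)
          (fun ω => Real.sqrt (Γ i i) *
            (ostat (fun t => v t ω) k₂ - ostat (fun t => v t ω) k₁)) μ μ) :=
  stmt19_general μ N m k c M z hz hsph Γ hΓ shat hmeas hindep hlaw
end
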